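/- arXiv:1304.3042 — 3 statements merged into one kernel-verified Lean document; each statement's English description precedes it below -/
import Mathlib

section
/- Assume 0 ∈ I. A function f : Iⁿ → ℝ is comonotonically modular if and only if for every permutation σ of X and every x ∈ Iⁿ_σ, letting p ∈ {0,…,n} be determined by x_{σ(p)} < 0 ≤ x_{σ(p+1)} (with conventions x_{σ(0)} = −∞ and x_{σ(n+1)} = +∞), one has f(x) = f(0) + Σ_{i=1}^p ( f(x_{σ(i)}·1_{S↓_σ(i)}) − f(x_{σ(i)}·1_{S↓_σ(i−1)}) ) + Σ_{i=p+1}^n ( f(x_{σ(i)}·1_{S↑_σ(i)}) − f(x_{σ(i)}·1_{S↑_σ(i+1)}) ). -/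
/-- `S↑_σ(i)` (0-indexed): the set `{σ(i), σ(i+1), …, σ(n-1)}`.  For `i = n` it is empty. -/
def SUp {n : ℕ} (σ : Equiv.Perm (Fin n)) (i : ℕ) : Finset (Fin n) :=
  (Finset.univ.filter (fun j : Fin n => i ≤ (j : ℕ))).image σ

/-- `S↓_σ(i)`: the set `{σ(0), …, σ(i-1)}`.  For `i = 0` it is empty. -/
def SDown {n : ℕ} (σ : Equiv.Perm (Fin n)) (i : ℕ) : Finset (Fin n) :=
  (Finset.univ.filter (fun j : Fin n => (j : ℕ) < i)).image σ

/-- Two tuples are comonotonic if some permutation sorts both nondecreasingly. -/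
def Comonotone {n : ℕ} (x y : Fin n → ℝ) : Prop :=
  ∃ σ : Equiv.Perm (Fin n), Monotone (x ∘ σ) ∧ Monotone (y ∘ σ)

/-- The tuple `r·1_S`. -/
def indTuple {n : ℕ} (S : Finset (Fin n)) (r : ℝ) : Fin n → ℝ :=
  fun j => if j ∈ S then r else 0

/-- The signed Choquet integral of `x` w.r.t. `v`, computed via a sorting permutation. -/
noncomputable def Cv {n : ℕ} (v : Finset (Fin n) → ℝ) (x : Fin n → ℝ) : ℝ :=
  ∑ i : Fin n,
    x (Tuple.sort x i) *
      (v (SUp (Tuple.sort x) (i : ℕ)) - v (SUp (Tuple.sort x) ((i : ℕ) + 1)))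

/-- `f` is the restriction to `Iⁿ` of a signed Choquet integral. -/
def IsSignedChoquetOn {n : ℕ} (I : Set ℝ) (f : (Fin n → ℝ) → ℝ) : Prop :=
  ∃ v : Finset (Fin n) → ℝ, v ∅ = 0 ∧
    ∀ σ : Equiv.Perm (Fin n), ∀ x : Fin n → ℝ, (∀ i, x i ∈ I) → Monotone (x ∘ σ) →
      f x = ∑ i : Fin n, x (σ i) * (v (SUp σ (i : ℕ)) - v (SUp σ ((i : ℕ) + 1)))

/-- `f` is the restriction to `Iⁿ` of a symmetric signed Choquet integral
`Č_v(x) = C_v(x⁺) - C_v(x⁻)`. -/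
def IsSymSignedChoquetOn {n : ℕ} (I : Set ℝ) (f : (Fin n → ℝ) → ℝ) : Prop :=
  ∃ v : Finset (Fin n) → ℝ, v ∅ = 0 ∧
    ∀ x : Fin n → ℝ, (∀ i, x i ∈ I) →
      f x = Cv v (fun i => max (x i) 0) - Cv v (fun i => max (-x i) 0)

/-- Comonotonic modularity (on tuples with entries in `D`). -/
def ComonModularOn {n : ℕ} (D : Set ℝ) (f : (Fin n → ℝ) → ℝ) : Prop :=
  ∀ x y : Fin n → ℝ, (∀ i, x i ∈ D) → (∀ i, y i ∈ D) → Comonotone x y →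
    f x + f y = f (fun i => min (x i) (y i)) + f (fun i => max (x i) (y i))

/-- Comonotonic additivity (on tuples with entries in `D`). -/
def ComonAdditiveOn {n : ℕ} (D : Set ℝ) (f : (Fin n → ℝ) → ℝ) : Prop :=
  ∀ x y : Fin n → ℝ, (∀ i, x i ∈ D) → (∀ i, y i ∈ D) → Comonotone x y →
    (∀ i, x i + y i ∈ D) → f (fun i => x i + y i) = f x + f y

/-- Comonotonic maxitivity. -/
def ComonMaxitiveOn {n : ℕ} (D : Set ℝ) (f : (Fin n → ℝ) → ℝ) : Prop :=
  ∀ x y : Fin n → ℝ, (∀ i, x i ∈ D) → (∀ i, y i ∈ D) → Comonotone x y →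
    f (fun i => max (x i) (y i)) = max (f x) (f y)

/-- Comonotonic minitivity. -/
def ComonMinitiveOn {n : ℕ} (D : Set ℝ) (f : (Fin n → ℝ) → ℝ) : Prop :=
  ∀ x y : Fin n → ℝ, (∀ i, x i ∈ D) → (∀ i, y i ∈ D) → Comonotone x y →
    f (fun i => min (x i) (y i)) = min (f x) (f y)

/-- Horizontal min-additivity. -/
def HorizMinAdditiveOn {n : ℕ} (D : Set ℝ) (f : (Fin n → ℝ) → ℝ) : Prop :=
  ∀ x : Fin n → ℝ, (∀ i, x i ∈ D) → ∀ c ∈ D, (∀ i, x i - min (x i) c ∈ D) →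
    f x = f (fun i => min (x i) c) + f (fun i => x i - min (x i) c)

/-- Horizontal max-additivity. -/
def HorizMaxAdditiveOn {n : ℕ} (D : Set ℝ) (f : (Fin n → ℝ) → ℝ) : Prop :=
  ∀ x : Fin n → ℝ, (∀ i, x i ∈ D) → ∀ c ∈ D, (∀ i, x i - max (x i) c ∈ D) →
    f x = f (fun i => max (x i) c) + f (fun i => x i - max (x i) c)

/-- Horizontal median-additivity (for `I` centered at `0`). -/
def HorizMedAdditiveOn {n : ℕ} (I : Set ℝ) (f : (Fin n → ℝ) → ℝ) : Prop :=
  ∀ x : Fin n → ℝ, (∀ i, x i ∈ I) → ∀ c ∈ I, 0 ≤ c →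
    f x = f (fun i => max (-c) (min (x i) c)) + f (fun i => x i - min (x i) c)
        + f (fun i => x i - max (x i) (-c))

/-- Invariance under horizontal min-differences (for domains of nonnegative tuples). -/
def InvHMinDiffOn {n : ℕ} (D : Set ℝ) (f : (Fin n → ℝ) → ℝ) : Prop :=
  ∀ x : Fin n → ℝ, (∀ i, x i ∈ D) → ∀ c ∈ D,
    f x - f (fun i => min (x i) c) =
      f (fun i => if x i ≤ c then 0 else x i) -
        f (fun i => min (if x i ≤ c then 0 else x i) c)

/-- Invariance under horizontal max-differences (for domains of nonpositive tuples). -/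
def InvHMaxDiffOn {n : ℕ} (D : Set ℝ) (f : (Fin n → ℝ) → ℝ) : Prop :=
  ∀ x : Fin n → ℝ, (∀ i, x i ∈ D) → ∀ c ∈ D,
    f x - f (fun i => max (x i) c) =
      f (fun i => if c ≤ x i then 0 else x i) -
        f (fun i => max (if c ≤ x i then 0 else x i) c)

/-- `⋀_{i ∈ S} x i`, with the convention that the empty infimum is `b`. -/
noncomputable def infWith {n : ℕ} (b : ℝ) (S : Finset (Fin n)) (x : Fin n → ℝ) : ℝ :=
  if h : S.Nonempty then S.inf' h x else b

/-- An `[a,b]`-valued capacity. -/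
def IsCapacityOn {n : ℕ} (a b : ℝ) (μ : Finset (Fin n) → ℝ) : Prop :=
  μ ∅ = a ∧ μ Finset.univ = b ∧ ∀ S T : Finset (Fin n), S ⊆ T → μ S ≤ μ T

/-- `f` is nondecreasing (in each argument) on tuples with entries in `D`. -/
def NondecreasingOn {n : ℕ} (D : Set ℝ) (f : (Fin n → ℝ) → ℝ) : Prop :=
  ∀ x y : Fin n → ℝ, (∀ i, x i ∈ D) → (∀ i, y i ∈ D) → (∀ i, x i ≤ y i) → f x ≤ f y

/-! For `x` sorted by `σ`, modularity applied to `x` and `0` gives `f x + f 0 = f x⁻ + f x⁺`.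
The positive part telescopes: `x_{σ i} • 1_{S↑(i)}` and the restriction of `x` to `S↑(i+1)` are
comonotonic, with infimum `x_{σ i} • 1_{S↑(i+1)}` and supremum the restriction of `x` to `S↑(i)`;
the negative part telescopes in the same way along `S↓`. Conversely, for fixed `σ` the right-hand
side is `f 0` plus a sum of functions of the single coordinates `x_{σ i}`, and such a sum is modular
on `σ`-sorted tuples because `g a + g b = g (min a b) + g (max a b)`. -/

open Finset

section ComonotonicModularity

variable {n : ℕ}

lemma mem_SUp_apply (σ : Equiv.Perm (Fin n)) (k : ℕ) (i : Fin n) :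
    σ i ∈ SUp σ k ↔ k ≤ (i : ℕ) := by
  simp [SUp]

lemma mem_SDown_apply (σ : Equiv.Perm (Fin n)) (k : ℕ) (i : Fin n) :
    σ i ∈ SDown σ k ↔ (i : ℕ) < k := by
  simp [SDown]

lemma SUp_self (σ : Equiv.Perm (Fin n)) : SUp σ n = ∅ := by
  simp [SUp, filter_eq_empty_iff]

lemma SDown_zero (σ : Equiv.Perm (Fin n)) : SDown σ 0 = ∅ := by
  simp [SDown]

lemma filter_le_val_eq_insert {k : ℕ} (hk : k < n) :
    univ.filter (fun i : Fin n => k ≤ (i : ℕ))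
      = insert ⟨k, hk⟩ (univ.filter (fun i : Fin n => k + 1 ≤ (i : ℕ))) := by
  ext i
  simp only [mem_filter, mem_univ, true_and, mem_insert, Fin.ext_iff]
  omega

lemma filter_val_lt_succ_eq_insert {k : ℕ} (hk : k < n) :
    univ.filter (fun i : Fin n => (i : ℕ) < k + 1)
      = insert ⟨k, hk⟩ (univ.filter (fun i : Fin n => (i : ℕ) < k)) := by
  ext i
  simp only [mem_filter, mem_univ, true_and, mem_insert, Fin.ext_iff]
  omega

lemma piecewise_zero_mem {I : Set ℝ} (h0I : (0 : ℝ) ∈ I) {x : Fin n → ℝ} (hx : ∀ i, x i ∈ I)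
    (S : Finset (Fin n)) (j : Fin n) : S.piecewise x 0 j ∈ I := by
  by_cases hj : j ∈ S <;> simp [hj, hx, h0I]

lemma monotone_piecewise_SUp {σ : Equiv.Perm (Fin n)} {x : Fin n → ℝ} (hx : Monotone (x ∘ σ))
    {k : ℕ} (hnonneg : ∀ i : Fin n, k ≤ (i : ℕ) → 0 ≤ x (σ i)) :
    Monotone ((SUp σ k).piecewise x 0 ∘ σ) := by
  intro a b hab
  have hab' : (a : ℕ) ≤ b := hab
  simp only [Function.comp_apply, piecewise, mem_SUp_apply, Pi.zero_apply]
  split_ifs with ha hb hb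
  · exact hx hab
  · omega
  · exact hnonneg b hb
  · exact le_rfl

lemma monotone_piecewise_SDown {σ : Equiv.Perm (Fin n)} {x : Fin n → ℝ} (hx : Monotone (x ∘ σ))
    {k : ℕ} (hnonpos : ∀ i : Fin n, (i : ℕ) < k → x (σ i) ≤ 0) :
    Monotone ((SDown σ k).piecewise x 0 ∘ σ) := by
  intro a b hab
  have hab' : (a : ℕ) ≤ b := hab
  simp only [Function.comp_apply, piecewise, mem_SDown_apply, Pi.zero_apply]
  split_ifs with ha hb hb
  · exact hx hab
  · exact hnonpos a ha
  · omega
  · exact le_rfl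

variable {I : Set ℝ} {f : (Fin n → ℝ) → ℝ} {σ : Equiv.Perm (Fin n)} {x : Fin n → ℝ}

lemma ComonModularOn.piecewise_SUp_eq (hf : ComonModularOn I f) (h0I : (0 : ℝ) ∈ I)
    (hx : ∀ i, x i ∈ I) (hmono : Monotone (x ∘ σ)) (i : Fin n)
    (hnonneg : ∀ j : Fin n, (i : ℕ) ≤ j → 0 ≤ x (σ j)) :
    f ((SUp σ i).piecewise x 0) = f (indTuple (SUp σ i) (x (σ i)))
      - f (indTuple (SUp σ (i + 1)) (x (σ i))) + f ((SUp σ (i + 1)).piecewise x 0) := by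
  set a := x (σ i) with ha_def
  have ha : 0 ≤ a := hnonneg i le_rfl
  -- `indTuple S r` is definitionally `S.piecewise (fun _ => r) 0`.
  have hcomon : Comonotone (indTuple (SUp σ i) a) ((SUp σ (i + 1)).piecewise x 0) :=
    ⟨σ, monotone_piecewise_SUp monotone_const fun _ _ => ha,
      monotone_piecewise_SUp hmono fun j hj => hnonneg j (by omega)⟩
  have hmin : (fun j => min (indTuple (SUp σ i) a j) ((SUp σ (i + 1)).piecewise x 0 j))
      = indTuple (SUp σ (i + 1)) a := by
    funext j
    obtain ⟨j, rfl⟩ := σ.surjective j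
    simp only [indTuple, piecewise, mem_SUp_apply, Pi.zero_apply]
    split_ifs with h1 h2 <;> first | omega | skip
    · exact min_eq_left (hmono (show i ≤ j from h1))
    · exact min_eq_right ha
    · exact min_self 0
  have hmax : (fun j => max (indTuple (SUp σ i) a j) ((SUp σ (i + 1)).piecewise x 0 j))
      = (SUp σ i).piecewise x 0 := by
    funext j
    obtain ⟨j, rfl⟩ := σ.surjective j
    simp only [indTuple, piecewise, mem_SUp_apply, Pi.zero_apply]
    split_ifs with h1 h2 <;> first | omega | skip
    · exact max_eq_right (hmono (show i ≤ j from h1))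
    · rw [max_eq_left ha, ha_def, show j = i from Fin.ext (by omega)]
    · exact max_self 0
  have hmod := hf (indTuple (SUp σ i) a) _ (piecewise_zero_mem h0I (fun _ => hx _) _)
    (piecewise_zero_mem h0I hx _) hcomon
  rw [hmin, hmax] at hmod
  linarith

lemma ComonModularOn.piecewise_SDown_succ_eq (hf : ComonModularOn I f) (h0I : (0 : ℝ) ∈ I)
    (hx : ∀ i, x i ∈ I) (hmono : Monotone (x ∘ σ)) (i : Fin n)
    (hnonpos : ∀ j : Fin n, (j : ℕ) ≤ i → x (σ j) ≤ 0) :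
    f ((SDown σ (i + 1)).piecewise x 0) = f ((SDown σ i).piecewise x 0)
      + f (indTuple (SDown σ (i + 1)) (x (σ i))) - f (indTuple (SDown σ i) (x (σ i))) := by
  set a := x (σ i) with ha_def
  have ha : a ≤ 0 := hnonpos i le_rfl
  have hcomon : Comonotone (indTuple (SDown σ (i + 1)) a) ((SDown σ i).piecewise x 0) :=
    ⟨σ, monotone_piecewise_SDown monotone_const fun _ _ => ha,
      monotone_piecewise_SDown hmono fun j hj => hnonpos j hj.le⟩
  have hmin : (fun j => min (indTuple (SDown σ (i + 1)) a j) ((SDown σ i).piecewise x 0 j))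
      = (SDown σ (i + 1)).piecewise x 0 := by
    funext j
    obtain ⟨j, rfl⟩ := σ.surjective j
    simp only [indTuple, piecewise, mem_SDown_apply, Pi.zero_apply]
    split_ifs with h1 h2 <;> first | omega | skip
    · exact min_eq_right (hmono (show j ≤ i from Nat.le_of_lt_succ h1))
    · rw [min_eq_left ha, ha_def, show j = i from Fin.ext (by omega)]
    · exact min_self 0
  have hmax : (fun j => max (indTuple (SDown σ (i + 1)) a j) ((SDown σ i).piecewise x 0 j))
      = indTuple (SDown σ i) a := by
    funext j
    obtain ⟨j, rfl⟩ := σ.surjective j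
    simp only [indTuple, piecewise, mem_SDown_apply, Pi.zero_apply]
    split_ifs with h1 h2 <;> first | omega | skip
    · exact max_eq_left (hmono (show j ≤ i from Nat.le_of_lt_succ h1))
    · exact max_eq_right ha
    · exact max_self 0
  have hmod := hf (indTuple (SDown σ (i + 1)) a) _ (piecewise_zero_mem h0I (fun _ => hx _) _)
    (piecewise_zero_mem h0I hx _) hcomon
  rw [hmin, hmax] at hmod
  linarith

lemma ComonModularOn.piecewise_SUp_eq_sum (hf : ComonModularOn I f) (h0I : (0 : ℝ) ∈ I)
    (hx : ∀ i, x i ∈ I) (hmono : Monotone (x ∘ σ)) {k : ℕ} (hk : k ≤ n)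
    (hnonneg : ∀ i : Fin n, k ≤ (i : ℕ) → 0 ≤ x (σ i)) :
    f ((SUp σ k).piecewise x 0) = f (fun _ => 0)
      + ∑ i ∈ univ.filter (fun i : Fin n => k ≤ (i : ℕ)),
          (f (indTuple (SUp σ i) (x (σ i))) - f (indTuple (SUp σ (i + 1)) (x (σ i)))) := by
  induction hk using Nat.decreasingInduction with
  | self =>
    have hempty : univ.filter (fun i : Fin n => n ≤ (i : ℕ)) = ∅ := by
      simp [filter_eq_empty_iff]
    rw [SUp_self, hempty]
    simp [← Pi.zero_def]
  | of_succ k hk ih =>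
    rw [filter_le_val_eq_insert hk, sum_insert (by simp),
      hf.piecewise_SUp_eq h0I hx hmono ⟨k, hk⟩ hnonneg, ih fun i hi => hnonneg i (by omega)]
    ring

lemma ComonModularOn.piecewise_SDown_eq_sum (hf : ComonModularOn I f) (h0I : (0 : ℝ) ∈ I)
    (hx : ∀ i, x i ∈ I) (hmono : Monotone (x ∘ σ)) {k : ℕ} (hk : k ≤ n)
    (hnonpos : ∀ i : Fin n, (i : ℕ) < k → x (σ i) ≤ 0) :
    f ((SDown σ k).piecewise x 0) = f (fun _ => 0)
      + ∑ i ∈ univ.filter (fun i : Fin n => (i : ℕ) < k),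
          (f (indTuple (SDown σ (i + 1)) (x (σ i))) - f (indTuple (SDown σ i) (x (σ i)))) := by
  induction k with
  | zero =>
    rw [SDown_zero]
    simp [← Pi.zero_def]
  | succ k ih =>
    rw [filter_val_lt_succ_eq_insert hk, sum_insert (by simp),
      hf.piecewise_SDown_succ_eq h0I hx hmono ⟨k, hk⟩ fun j hj => hnonpos j (Nat.lt_succ_of_le hj),
      ih (by omega) fun i hi => hnonpos i (by omega)]
    ring

theorem ComonModularOn.eq_sum_of_monotone (hf : ComonModularOn I f) (h0I : (0 : ℝ) ∈ I)
    (hx : ∀ i, x i ∈ I) (hmono : Monotone (x ∘ σ)) {p : ℕ} (hp : p ≤ n)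
    (hneg : ∀ i : Fin n, (i : ℕ) < p → x (σ i) < 0)
    (hnonneg : ∀ i : Fin n, p ≤ (i : ℕ) → 0 ≤ x (σ i)) :
    f x = f (fun _ => 0)
      + (∑ i ∈ univ.filter (fun i : Fin n => (i : ℕ) < p),
          (f (indTuple (SDown σ (i + 1)) (x (σ i))) - f (indTuple (SDown σ i) (x (σ i)))))
      + ∑ i ∈ univ.filter (fun i : Fin n => p ≤ (i : ℕ)),
          (f (indTuple (SUp σ i) (x (σ i))) - f (indTuple (SUp σ (i + 1)) (x (σ i)))) := by
  have hsplit : f x + f (fun _ => 0) = f (fun i => min (x i) 0) + f (fun i => max (x i) 0) :=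
    hf x (fun _ => 0) hx (fun _ => h0I) ⟨σ, hmono, monotone_const⟩
  have hmin : (fun i => min (x i) 0) = (SDown σ p).piecewise x 0 := by
    funext j
    obtain ⟨j, rfl⟩ := σ.surjective j
    simp only [piecewise, mem_SDown_apply, Pi.zero_apply]
    split_ifs with h
    · exact min_eq_left (hneg j h).le
    · exact min_eq_right (hnonneg j (not_lt.mp h))
  have hmax : (fun i => max (x i) 0) = (SUp σ p).piecewise x 0 := by
    funext j
    obtain ⟨j, rfl⟩ := σ.surjective j
    simp only [piecewise, mem_SUp_apply, Pi.zero_apply]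
    split_ifs with h
    · exact max_eq_left (hnonneg j h)
    · exact max_eq_right (hneg j (not_le.mp h)).le
  rw [hmin, hmax, hf.piecewise_SDown_eq_sum h0I hx hmono hp fun i hi => (hneg i hi).le,
    hf.piecewise_SUp_eq_sum h0I hx hmono hp hnonneg] at hsplit
  linarith

lemma exists_sign_threshold {g : Fin n → ℝ} (hg : Monotone g) :
    ∃ p ≤ n, (∀ i : Fin n, (i : ℕ) < p → g i < 0) ∧ ∀ i : Fin n, p ≤ (i : ℕ) → 0 ≤ g i := by
  classical
  have hex : ∃ p, ∀ i : Fin n, p ≤ (i : ℕ) → 0 ≤ g i := ⟨n, fun i hi => absurd i.isLt (by omega)⟩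
  refine ⟨Nat.find hex, Nat.find_min' hex fun i hi => absurd i.isLt (by omega),
    fun i hi => ?_, Nat.find_spec hex⟩
  by_contra h
  exact Nat.find_min hex hi fun j hj => (not_lt.mp h).trans (hg (show i ≤ j from hj))

lemma comonModularOn_of_eq_add_sum {c : ℝ} (g : Equiv.Perm (Fin n) → ℝ → ℕ → ℝ)
    (h : ∀ (τ : Equiv.Perm (Fin n)) (y : Fin n → ℝ), (∀ i, y i ∈ I) → Monotone (y ∘ τ) →
      f y = c + ∑ i : Fin n, g τ (y (τ i)) i) :
    ComonModularOn I f := by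
  rintro x y hx hy ⟨σ, hxm, hym⟩
  have hterm (a b : ℝ) (k : ℕ) : g σ a k + g σ b k = g σ (min a b) k + g σ (max a b) k := by
    rcases le_total a b with hab | hab
    · rw [min_eq_left hab, max_eq_right hab]
    · rw [min_eq_right hab, max_eq_left hab, add_comm]
  have hmem (i : Fin n) : min (x i) (y i) ∈ I ∧ max (x i) (y i) ∈ I := by
    rcases le_total (x i) (y i) with hxy | hxy <;> simp [hxy, hx i, hy i]
  rw [h σ x hx hxm, h σ y hy hym,
    h σ (fun i => min (x i) (y i)) (fun i => (hmem i).1)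
      fun a b hab => min_le_min (hxm hab) (hym hab),
    h σ (fun i => max (x i) (y i)) (fun i => (hmem i).2)
      fun a b hab => max_le_max (hxm hab) (hym hab),
    add_add_add_comm, ← sum_add_distrib, add_add_add_comm, ← sum_add_distrib]
  exact congrArg _ (sum_congr rfl fun i _ => hterm _ _ _)

noncomputable def signedIncrement (f : (Fin n → ℝ) → ℝ) (σ : Equiv.Perm (Fin n)) (r : ℝ) (k : ℕ) :
    ℝ :=
  if r < 0 then f (indTuple (SDown σ (k + 1)) r) - f (indTuple (SDown σ k) r)
  else f (indTuple (SUp σ k) r) - f (indTuple (SUp σ (k + 1)) r)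

lemma sum_filter_add_sum_filter_eq_sum_signedIncrement {p : ℕ}
    (hneg : ∀ i : Fin n, (i : ℕ) < p → x (σ i) < 0)
    (hnonneg : ∀ i : Fin n, p ≤ (i : ℕ) → 0 ≤ x (σ i)) :
    (∑ i ∈ univ.filter (fun i : Fin n => (i : ℕ) < p),
        (f (indTuple (SDown σ (i + 1)) (x (σ i))) - f (indTuple (SDown σ i) (x (σ i)))))
      + ∑ i ∈ univ.filter (fun i : Fin n => p ≤ (i : ℕ)),
        (f (indTuple (SUp σ i) (x (σ i))) - f (indTuple (SUp σ (i + 1)) (x (σ i))))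
      = ∑ i : Fin n, signedIncrement f σ (x (σ i)) i := by
  rw [← sum_filter_add_sum_filter_not univ (fun i : Fin n => (i : ℕ) < p)]
  simp only [not_lt]
  congr 1 <;> refine sum_congr rfl fun i hi => ?_
  · rw [signedIncrement, if_pos (hneg i (mem_filter.mp hi).2)]
  · rw [signedIncrement, if_neg (not_lt.mpr (hnonneg i (mem_filter.mp hi).2))]

end ComonotonicModularity

theorem statement10_general (n : ℕ) (I : Set ℝ) (h0I : (0 : ℝ) ∈ I)
    (f : (Fin n → ℝ) → ℝ) :
    ComonModularOn I f ↔
      ∀ σ : Equiv.Perm (Fin n), ∀ x : Fin n → ℝ, (∀ i, x i ∈ I) → Monotone (x ∘ σ) →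
        ∀ p : ℕ, p ≤ n → (∀ i : Fin n, (i : ℕ) < p → x (σ i) < 0) →
          (∀ i : Fin n, p ≤ (i : ℕ) → 0 ≤ x (σ i)) →
          f x = f (fun _ => 0)
            + (∑ i ∈ Finset.univ.filter (fun i : Fin n => (i : ℕ) < p),
                (f (indTuple (SDown σ ((i : ℕ) + 1)) (x (σ i)))
                  - f (indTuple (SDown σ (i : ℕ)) (x (σ i)))))
            + ∑ i ∈ Finset.univ.filter (fun i : Fin n => p ≤ (i : ℕ)),
                (f (indTuple (SUp σ (i : ℕ)) (x (σ i)))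
                  - f (indTuple (SUp σ ((i : ℕ) + 1)) (x (σ i)))) := by
  refine ⟨fun hf σ x hx hmono p hp hneg hnonneg =>
    hf.eq_sum_of_monotone h0I hx hmono hp hneg hnonneg, fun h => ?_⟩
  refine comonModularOn_of_eq_add_sum (c := f fun _ => 0) (signedIncrement f)
    fun σ x hx hmono => ?_
  obtain ⟨p, hp, hneg, hnonneg⟩ := exists_sign_threshold hmono
  rw [h σ x hx hmono p hp hneg hnonneg, add_assoc,
    sum_filter_add_sum_filter_eq_sum_signedIncrement hneg hnonneg]

theorem statement10 (n : ℕ) (hn : 0 < n) (I : Set ℝ) (hI : I.OrdConnected)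
    (hInt : ∃ a b : ℝ, a ∈ I ∧ b ∈ I ∧ a < b) (h0I : (0 : ℝ) ∈ I)
    (f : (Fin n → ℝ) → ℝ) :
    ComonModularOn I f ↔
      ∀ σ : Equiv.Perm (Fin n), ∀ x : Fin n → ℝ, (∀ i, x i ∈ I) → Monotone (x ∘ σ) →
        ∀ p : ℕ, p ≤ n → (∀ i : Fin n, (i : ℕ) < p → x (σ i) < 0) →
          (∀ i : Fin n, p ≤ (i : ℕ) → 0 ≤ x (σ i)) →
          f x = f (fun _ => 0)
            + (∑ i ∈ Finset.univ.filter (fun i : Fin n => (i : ℕ) < p),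
                (f (indTuple (SDown σ ((i : ℕ) + 1)) (x (σ i)))
                  - f (indTuple (SDown σ (i : ℕ)) (x (σ i)))))
            + ∑ i ∈ Finset.univ.filter (fun i : Fin n => p ≤ (i : ℕ)),
                (f (indTuple (SUp σ (i : ℕ)) (x (σ i)))
                  - f (indTuple (SUp σ ((i : ℕ) + 1)) (x (σ i)))) :=
  statement10_general n I h0I f
end

section
/- Assume I = [a,b] ⊆ ℝ. A function f : Iⁿ → ℝ is comonotonic maxitive if and only if there exists a nondecreasing function g : Iⁿ → ℝ such that f(x) = ⋁_{S⊆X} g(e_S ∧ ⋀_{i∈S} x_i) for all x ∈ Iⁿ (with the convention that ⋀_{i∈∅} x_i = b); in that case one may take g = f. -/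
/-!
Sort `x` by a permutation `σ`. Then `x` is the pointwise maximum of the tuples `e_T ∧ ⋀_T x`
over its upper level sets `T = {i | c ≤ x i}`; these tuples are all sorted by `σ`, so comonotonic
maxitivity turns `f x` into the maximum of their values. Any other term `f (e_S ∧ ⋀_S x)` is
dominated by the term of the level set at height `⋀_S x`, which contains `S` and has the same
infimum, because `e_S ∧ c ≤ e_T ∧ c'` are comonotonic whenever `S ⊆ T` and `c ≤ c'`. The same
comparison shows that `c ↦ f (e_S ∧ c)` is monotone, so the representation makes `f`
nondecreasing. Conversely, for comonotonic `x, y` every `⋀_S` is attained at an index common to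
`x` and `y`, so `⋀_S (x ∨ y) = ⋀_S x ∨ ⋀_S y`, and a nondecreasing `g` commutes with this maximum.
-/

open Finset

lemma Finset.sup'_max_eq_max_sup' {ι α : Type*} [LinearOrder α] {s : Finset ι}
    (hs : s.Nonempty) (u v : ι → α) :
    s.sup' hs (fun i => max (u i) (v i)) = max (s.sup' hs u) (s.sup' hs v) :=
  le_antisymm (sup'_le _ _ fun _ hi => max_le_max (le_sup' u hi) (le_sup' v hi))
    (max_le (sup'_mono_fun fun _ _ => le_max_left _ _)
      (sup'_mono_fun fun _ _ => le_max_right _ _))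

variable {n : ℕ} {a b : ℝ}

/-- The tuple `e_S ∧ c`. -/
def eInf (a b : ℝ) (S : Finset (Fin n)) (c : ℝ) : Fin n → ℝ :=
  fun i => min (if i ∈ S then b else a) c

section Comonotone

variable {x y : Fin n → ℝ}

lemma Comonotone.exists_common_min (h : Comonotone x y) {S : Finset (Fin n)}
    (hS : S.Nonempty) : ∃ m ∈ S, ∀ i ∈ S, x m ≤ x i ∧ y m ≤ y i := by
  obtain ⟨σ, hx, hy⟩ := h
  obtain ⟨m, hm, hmin⟩ := S.exists_min_image σ.symm hS
  refine ⟨m, hm, fun i hi => ?_⟩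
  have hx' := hx (hmin i hi)
  have hy' := hy (hmin i hi)
  simp only [Function.comp_apply, Equiv.apply_symm_apply] at hx' hy'
  exact ⟨hx', hy'⟩

variable {D : Set ℝ} {f : (Fin n → ℝ) → ℝ}

lemma ComonMaxitiveOn.le_of_le (hf : ComonMaxitiveOn D f) (hx : ∀ i, x i ∈ D)
    (hy : ∀ i, y i ∈ D) (hxy : Comonotone x y) (hle : ∀ i, x i ≤ y i) : f x ≤ f y := by
  have h := hf x y hx hy hxy
  simp only [max_eq_right (hle _)] at h
  exact h ▸ le_max_left _ _

lemma ComonMaxitiveOn.map_sup' (hf : ComonMaxitiveOn D f) (σ : Equiv.Perm (Fin n))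
    {ι : Type*} {K : Finset ι} (hK : K.Nonempty) (z : ι → Fin n → ℝ)
    (hmem : ∀ k ∈ K, ∀ i, z k i ∈ D) (hmono : ∀ k ∈ K, Monotone (z k ∘ σ)) :
    f (fun i => K.sup' hK (fun k => z k i)) = K.sup' hK (fun k => f (z k)) := by
  induction hK using Finset.Nonempty.cons_induction with
  | singleton k => simp
  | cons k s hks hs ih =>
    have hmem' : ∀ m ∈ s, ∀ i, z m i ∈ D := fun m hm => hmem m (mem_cons_of_mem hm)
    have hmono' : ∀ m ∈ s, Monotone (z m ∘ σ) := fun m hm => hmono m (mem_cons_of_mem hm)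
    have hsup_mem : ∀ i, s.sup' hs (fun m => z m i) ∈ D := fun i => by
      obtain ⟨m, hm, hmax⟩ := s.exists_mem_eq_sup' hs (fun m => z m i)
      exact hmax ▸ hmem' m hm i
    have hcomon : Comonotone (z k) (fun i => s.sup' hs (fun m => z m i)) :=
      ⟨σ, hmono k (mem_cons_self k s), fun p q hpq =>
        sup'_mono_fun (hs := hs) fun m hm => hmono' m hm hpq⟩
    simp only [sup'_cons hs]
    rw [hf _ _ (hmem k (mem_cons_self k s)) hsup_mem hcomon, ih hmem' hmono']

end Comonotone

section eInf

variable {S T : Finset (Fin n)} {c c' : ℝ}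

lemma eInf_mem (hc : c ∈ Set.Icc a b) (i : Fin n) : eInf a b S c i ∈ Set.Icc a b := by
  refine ⟨le_min ?_ hc.1, (min_le_right _ _).trans hc.2⟩
  split_ifs
  exacts [hc.1.trans hc.2, le_rfl]

lemma eInf_le_eInf (hab : a ≤ b) (hcc : c ≤ c') {i j : Fin n} (h : i ∈ S → j ∈ T) :
    eInf a b S c i ≤ eInf a b T c' j := by
  refine min_le_min ?_ hcc
  by_cases hi : i ∈ S
  · simp [hi, h hi]
  · simp only [hi, if_false]
    split_ifs
    exacts [hab, le_rfl]

lemma eInf_comonotone (hab : a ≤ b) (hST : S ⊆ T) (c c' : ℝ) :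
    Comonotone (eInf a b S c) (eInf a b T c') := by
  let level : Fin n → ℕ := fun i => if i ∈ S then 2 else if i ∈ T then 1 else 0
  have hlevel {i j : Fin n} (h : level i ≤ level j) :
      (i ∈ S → j ∈ S) ∧ (i ∈ T → j ∈ T) := by
    simp only [level] at h
    constructor <;> intro hi <;> by_contra hj <;> split_ifs at h <;>
      first | omega | exact hj (hST ‹j ∈ S›)
  exact ⟨Tuple.sort level,
    fun p q hpq => eInf_le_eInf hab le_rfl (hlevel (Tuple.monotone_sort level hpq)).1,
    fun p q hpq => eInf_le_eInf hab le_rfl (hlevel (Tuple.monotone_sort level hpq)).2⟩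

lemma ComonMaxitiveOn.eInf_mono {f : (Fin n → ℝ) → ℝ} (hf : ComonMaxitiveOn (Set.Icc a b) f)
    (hab : a ≤ b) (hST : S ⊆ T) (hc : c ∈ Set.Icc a b) (hc' : c' ∈ Set.Icc a b) (hcc : c ≤ c') :
    f (eInf a b S c) ≤ f (eInf a b T c') :=
  hf.le_of_le (eInf_mem hc) (eInf_mem hc') (eInf_comonotone hab hST c c')
    fun _ => eInf_le_eInf hab hcc fun h => hST h

lemma ComonMaxitiveOn.monotoneOn_eInf {f : (Fin n → ℝ) → ℝ}
    (hf : ComonMaxitiveOn (Set.Icc a b) f) (hab : a ≤ b) (S : Finset (Fin n)) :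
    MonotoneOn (fun c => f (eInf a b S c)) (Set.Icc a b) :=
  fun _ hc _ hc' hcc => hf.eInf_mono hab subset_rfl hc hc' hcc

lemma NondecreasingOn.monotoneOn_eInf {g : (Fin n → ℝ) → ℝ}
    (hg : NondecreasingOn (Set.Icc a b) g) (hab : a ≤ b) (S : Finset (Fin n)) :
    MonotoneOn (fun c => g (eInf a b S c)) (Set.Icc a b) :=
  fun _ hc _ hc' hcc => hg _ _ (eInf_mem hc) (eInf_mem hc') fun _ => eInf_le_eInf hab hcc id

end eInf

section infWith

variable {S T : Finset (Fin n)} {x y : Fin n → ℝ}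

lemma infWith_le {i : Fin n} (hi : i ∈ S) : infWith b S x ≤ x i := by
  rw [infWith, dif_pos ⟨i, hi⟩]
  exact inf'_le x hi

lemma infWith_le_right (hxb : ∀ i, x i ≤ b) : infWith b S x ≤ b := by
  unfold infWith
  split_ifs with hS
  · obtain ⟨i, hi⟩ := hS
    exact (inf'_le x hi).trans (hxb i)
  · exact le_rfl

lemma le_infWith {c : ℝ} (hcx : ∀ i ∈ S, c ≤ x i) (hcb : c ≤ b) : c ≤ infWith b S x := by
  unfold infWith
  split_ifs
  exacts [le_inf' _ _ hcx, hcb]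

lemma infWith_mem (hx : ∀ i, x i ∈ Set.Icc a b) (hab : a ≤ b) (S : Finset (Fin n)) :
    infWith b S x ∈ Set.Icc a b :=
  ⟨le_infWith (fun i _ => (hx i).1) hab, infWith_le_right fun i => (hx i).2⟩

lemma infWith_mono (hxy : ∀ i, x i ≤ y i) (S : Finset (Fin n)) :
    infWith b S x ≤ infWith b S y := by
  unfold infWith
  split_ifs
  exacts [inf'_mono_fun fun i _ => hxy i, le_rfl]

lemma infWith_anti (hxb : ∀ i, x i ≤ b) (hST : S ⊆ T) : infWith b T x ≤ infWith b S x := by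
  rcases S.eq_empty_or_nonempty with rfl | hS
  · exact infWith_le_right hxb
  · rw [infWith, infWith, dif_pos hS, dif_pos (hS.mono hST)]
    exact inf'_mono x hST hS

lemma infWith_singleton (i : Fin n) : infWith b {i} x = x i := by
  rw [infWith, dif_pos (singleton_nonempty i), inf'_singleton]

lemma infWith_max_of_comonotone (hxy : Comonotone x y) (S : Finset (Fin n)) :
    infWith b S (fun i => max (x i) (y i)) = max (infWith b S x) (infWith b S y) := by
  rcases S.eq_empty_or_nonempty with rfl | hS
  · simp [infWith]
  obtain ⟨m, hm, hmin⟩ := hxy.exists_common_min hS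
  have hattained {z : Fin n → ℝ} (hz : ∀ i ∈ S, z m ≤ z i) : infWith b S z = z m := by
    rw [infWith, dif_pos hS]
    exact le_antisymm (inf'_le z hm) (le_inf' _ _ hz)
  rw [hattained fun i hi => (hmin i hi).1, hattained fun i hi => (hmin i hi).2,
    hattained fun i hi => max_le_max (hmin i hi).1 (hmin i hi).2]

noncomputable def infLevelSet (b : ℝ) (S : Finset (Fin n)) (x : Fin n → ℝ) : Finset (Fin n) :=
  univ.filter fun i => infWith b S x ≤ x i

lemma subset_infLevelSet : S ⊆ infLevelSet b S x :=
  fun _ hi => mem_filter.2 ⟨mem_univ _, infWith_le hi⟩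

lemma infWith_infLevelSet (hxb : ∀ i, x i ≤ b) :
    infWith b (infLevelSet b S x) x = infWith b S x :=
  le_antisymm (infWith_anti hxb subset_infLevelSet)
    (le_infWith (fun _ hi => (mem_filter.1 hi).2) (infWith_le_right hxb))

end infWith

noncomputable def infTerm (a b : ℝ) (S : Finset (Fin n)) (x : Fin n → ℝ) : Fin n → ℝ :=
  eInf a b S (infWith b S x)

section infTerm

variable {S : Finset (Fin n)} {x : Fin n → ℝ}

lemma infTerm_mem (hx : ∀ i, x i ∈ Set.Icc a b) (hab : a ≤ b) (i : Fin n) :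
    infTerm a b S x i ∈ Set.Icc a b :=
  eInf_mem (infWith_mem hx hab S) i

lemma infTerm_le (hx : ∀ i, x i ∈ Set.Icc a b) (i : Fin n) : infTerm a b S x i ≤ x i := by
  by_cases hi : i ∈ S
  · exact (min_le_right _ _).trans (infWith_le hi)
  · simp only [infTerm, eInf, hi, if_false]
    exact (min_le_left _ _).trans (hx i).1

lemma infTerm_infLevelSet_singleton (hx : ∀ i, x i ∈ Set.Icc a b) (i : Fin n) :
    infTerm a b (infLevelSet b {i} x) x i = x i := by
  have hi : i ∈ infLevelSet b {i} x := subset_infLevelSet (mem_singleton_self i)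
  simp only [infTerm, eInf, hi, if_true, infWith_infLevelSet fun j => (hx j).2, infWith_singleton]
  exact min_eq_right (hx i).2

lemma monotone_infTerm_infLevelSet (hab : a ≤ b) {σ : Equiv.Perm (Fin n)}
    (hσ : Monotone (x ∘ σ)) : Monotone (infTerm a b (infLevelSet b S x) x ∘ σ) :=
  fun _ _ hpq => eInf_le_eInf hab le_rfl fun hp =>
    mem_filter.2 ⟨mem_univ _, (mem_filter.1 hp).2.trans (hσ hpq)⟩

lemma ComonMaxitiveOn.le_infTerm_infLevelSet {f : (Fin n → ℝ) → ℝ}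
    (hf : ComonMaxitiveOn (Set.Icc a b) f) (hab : a ≤ b) (hx : ∀ i, x i ∈ Set.Icc a b) :
    f (infTerm a b S x) ≤ f (infTerm a b (infLevelSet b S x) x) :=
  hf.eInf_mono hab subset_infLevelSet (infWith_mem hx hab S) (infWith_mem hx hab _)
    (infWith_infLevelSet fun i => (hx i).2).ge

end infTerm

theorem ComonMaxitiveOn.eq_sup'_infTerm {f : (Fin n → ℝ) → ℝ}
    (hf : ComonMaxitiveOn (Set.Icc a b) f) (hab : a ≤ b) {x : Fin n → ℝ}
    (hx : ∀ i, x i ∈ Set.Icc a b) :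
    f x = univ.sup' ⟨∅, mem_univ ∅⟩ fun S => f (infTerm a b S x) := by
  have hsorted : ∀ S ∈ (univ : Finset (Finset (Fin n))),
      Monotone (infTerm a b (infLevelSet b S x) x ∘ Tuple.sort x) :=
    fun _ _ => monotone_infTerm_infLevelSet hab (Tuple.monotone_sort x)
  have hdecomp : (fun i => univ.sup' ⟨∅, mem_univ ∅⟩
      fun S => infTerm a b (infLevelSet b S x) x i) = x :=
    funext fun i => le_antisymm (sup'_le _ _ fun S _ => infTerm_le hx i)
      (le_sup'_of_le _ (mem_univ ({i} : Finset (Fin n))) (infTerm_infLevelSet_singleton hx i).ge)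
  have hdominated (S : Finset (Fin n)) : f (infTerm a b S x) ≤ f x :=
    (hf.le_infTerm_infLevelSet hab hx).trans <| hf.le_of_le (infTerm_mem hx hab) hx
      ⟨Tuple.sort x, hsorted S (mem_univ S), Tuple.monotone_sort x⟩ (infTerm_le hx)
  refine le_antisymm ?_ (sup'_le _ _ fun S _ => hdominated S)
  calc f x = univ.sup' ⟨∅, mem_univ ∅⟩ fun S => f (infTerm a b (infLevelSet b S x) x) := by
        conv_lhs => rw [← hdecomp]
        exact hf.map_sup' (Tuple.sort x) _ _ (fun S _ => infTerm_mem hx hab) hsorted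
    _ ≤ _ := sup'_le _ _ fun S _ => le_sup' (fun T => f (infTerm a b T x)) (mem_univ _)

variable {f : (Fin n → ℝ) → ℝ}

theorem nondecreasingOn_of_eq_sup' (φ : Finset (Fin n) → ℝ → ℝ)
    (hφ : ∀ S, MonotoneOn (φ S) (Set.Icc a b)) (hab : a ≤ b)
    (hrep : ∀ x : Fin n → ℝ, (∀ i, x i ∈ Set.Icc a b) →
      f x = univ.sup' ⟨∅, mem_univ ∅⟩ fun S => φ S (infWith b S x)) :
    NondecreasingOn (Set.Icc a b) f := by
  intro x y hx hy hxy
  rw [hrep x hx, hrep y hy]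
  exact sup'_mono_fun fun S _ =>
    hφ S (infWith_mem hx hab S) (infWith_mem hy hab S) (infWith_mono hxy S)

theorem comonMaxitiveOn_of_eq_sup' (φ : Finset (Fin n) → ℝ → ℝ)
    (hφ : ∀ S, MonotoneOn (φ S) (Set.Icc a b)) (hab : a ≤ b)
    (hrep : ∀ x : Fin n → ℝ, (∀ i, x i ∈ Set.Icc a b) →
      f x = univ.sup' ⟨∅, mem_univ ∅⟩ fun S => φ S (infWith b S x)) :
    ComonMaxitiveOn (Set.Icc a b) f := by
  intro x y hx hy hxy
  have hmax : ∀ i, max (x i) (y i) ∈ Set.Icc a b := fun i =>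
    ⟨(hx i).1.trans (le_max_left _ _), max_le (hx i).2 (hy i).2⟩
  rw [hrep _ hmax, hrep x hx, hrep y hy]
  refine (sup'_congr _ rfl fun S _ => ?_).trans (sup'_max_eq_max_sup' _ _ _)
  rw [infWith_max_of_comonotone hxy S]
  exact (hφ S).map_max (infWith_mem hx hab S) (infWith_mem hy hab S)

theorem statement11_general (n : ℕ) (a b : ℝ) (hab : a < b)
    (f : (Fin n → ℝ) → ℝ) :
    (ComonMaxitiveOn (Set.Icc a b) f ↔
      ∃ g : (Fin n → ℝ) → ℝ, NondecreasingOn (Set.Icc a b) g ∧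
        ∀ x : Fin n → ℝ, (∀ i, x i ∈ Set.Icc a b) →
          f x = Finset.sup' Finset.univ ⟨∅, Finset.mem_univ ∅⟩
            (fun S : Finset (Fin n) =>
              g (fun i => min (if i ∈ S then b else a) (infWith b S x))))
    ∧
    (ComonMaxitiveOn (Set.Icc a b) f →
      ∀ x : Fin n → ℝ, (∀ i, x i ∈ Set.Icc a b) →
        f x = Finset.sup' Finset.univ ⟨∅, Finset.mem_univ ∅⟩
          (fun S : Finset (Fin n) =>
            f (fun i => min (if i ∈ S then b else a) (infWith b S x)))) := by
  have hrepr (hf : ComonMaxitiveOn (Set.Icc a b) f) (x : Fin n → ℝ)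
      (hx : ∀ i, x i ∈ Set.Icc a b) := hf.eq_sup'_infTerm hab.le hx
  refine ⟨⟨fun hf => ⟨f, ?_, hrepr hf⟩, fun ⟨g, hg, hg_repr⟩ => ?_⟩, hrepr⟩
  · exact nondecreasingOn_of_eq_sup' _ (hf.monotoneOn_eInf hab.le) hab.le (hrepr hf)
  · exact comonMaxitiveOn_of_eq_sup' _ (hg.monotoneOn_eInf hab.le) hab.le hg_repr

theorem statement11 (n : ℕ) (hn : 0 < n) (a b : ℝ) (hab : a < b)
    (f : (Fin n → ℝ) → ℝ) :
    (ComonMaxitiveOn (Set.Icc a b) f ↔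
      ∃ g : (Fin n → ℝ) → ℝ, NondecreasingOn (Set.Icc a b) g ∧
        ∀ x : Fin n → ℝ, (∀ i, x i ∈ Set.Icc a b) →
          f x = Finset.sup' Finset.univ ⟨∅, Finset.mem_univ ∅⟩
            (fun S : Finset (Fin n) =>
              g (fun i => min (if i ∈ S then b else a) (infWith b S x))))
    ∧
    (ComonMaxitiveOn (Set.Icc a b) f →
      ∀ x : Fin n → ℝ, (∀ i, x i ∈ Set.Icc a b) →
        f x = Finset.sup' Finset.univ ⟨∅, Finset.mem_univ ∅⟩
          (fun S : Finset (Fin n) =>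
            f (fun i => min (if i ∈ S then b else a) (infWith b S x)))) :=
  statement11_general n a b hab f
end

section
/- Assume [0,1] ⊆ I ⊆ ℝ₊ or [−1,1] ⊆ I. A function f : Iⁿ → ℝ is a signed Choquet integral if and only if: (i) f is comonotonically modular; (ii) f(0) = 0 and f(x·1_S) = sign(x)·x·f(sign(x)·1_S) for all x ∈ I and S ⊆ X; and (iii) if [−1,1] ⊆ I, then f(1_{X∖S}) = f(1) + f(−1_S) for all S ⊆ X. -/
/-!
For a fixed permutation `σ` the Choquet sum `x ↦ ∑ᵢ x_{σ i} (v(S↑_σ(i)) - v(S↑_σ(i+1)))` is linear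
in `x`, which gives (i)–(iii) for a signed Choquet integral. Conversely, with `v S = f(1_S)`, on each
cone of tuples sorted by `σ` both `f` and the Choquet sum are modular, and by (ii) and (iii) they
agree on the sorted tuples `c·1_S`. A function that is modular on the cone and vanishes on
these level tuples vanishes on the whole cone: a nonnegative sorted tuple is peeled off from below,
one level tuple at a time, a nonpositive one is handled by the symmetry `x ↦ -x`, and a general one
is split as `min(x, 0) + max(x, 0)`.
-/

open Finset

section Sorted

variable {n : ℕ} {I : Set ℝ} {σ : Equiv.Perm (Fin n)}

lemma apply_mem_SUp_iff (σ : Equiv.Perm (Fin n)) (k : ℕ) (p : Fin n) :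
    σ p ∈ SUp σ k ↔ k ≤ (p : ℕ) := by
  simp [SUp]

lemma SUp_zero (σ : Equiv.Perm (Fin n)) : SUp σ 0 = univ := by
  ext j
  obtain ⟨p, rfl⟩ := σ.surjective j
  simp [apply_mem_SUp_iff]

lemma SUp_eq_empty_of_le (σ : Equiv.Perm (Fin n)) {k : ℕ} (hk : n ≤ k) : SUp σ k = ∅ := by
  ext j
  obtain ⟨p, rfl⟩ := σ.surjective j
  simp only [apply_mem_SUp_iff, notMem_empty, iff_false, not_le]
  omega

lemma indTuple_zero (S : Finset (Fin n)) : indTuple S 0 = 0 := by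
  ext j
  simp [indTuple]

lemma indTuple_empty (c : ℝ) : indTuple (∅ : Finset (Fin n)) c = 0 := by
  ext j
  simp [indTuple]

lemma indTuple_smul (S : Finset (Fin n)) (a c : ℝ) : indTuple S (a * c) = a • indTuple S c := by
  ext j
  simp only [indTuple, Pi.smul_apply, smul_eq_mul]
  split_ifs <;> simp

lemma neg_indTuple (S : Finset (Fin n)) (c : ℝ) : -indTuple S c = indTuple S (-c) := by
  ext j
  simp only [indTuple, Pi.neg_apply]
  split_ifs <;> simp

lemma indTuple_compl_neg (S : Finset (Fin n)) (c : ℝ) :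
    indTuple Sᶜ (-c) = indTuple S c - fun _ => c := by
  ext j
  simp only [indTuple, mem_compl, Pi.sub_apply]
  split_ifs <;> simp

lemma indTuple_mem {S : Finset (Fin n)} {c : ℝ} (h0 : (0 : ℝ) ∈ I) (hc : c ∈ I) (j : Fin n) :
    indTuple S c j ∈ I := by
  unfold indTuple
  split_ifs <;> assumption

lemma exists_eq_SUp_of_monotone {S : Finset (Fin n)} {c : ℝ} (hc : 0 < c)
    (h : Monotone (indTuple S c ∘ σ)) : ∃ m, S = SUp σ m := by
  set L := univ.filter fun p => σ p ∉ S
  have hL : ∀ p q, q ≤ p → p ∈ L → q ∈ L := by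
    intro p q hqp hp
    simp only [L, mem_filter, mem_univ, true_and] at hp ⊢
    intro hq
    have := h hqp
    simp only [Function.comp_apply, indTuple, hq, hp, if_true, if_false] at this
    linarith
  refine ⟨#L, ?_⟩
  ext j
  obtain ⟨p, rfl⟩ := σ.surjective j
  rw [apply_mem_SUp_iff]
  constructor
  · intro hp
    refine (card_le_card fun q hq => ?_).trans_eq (Fin.card_Iio p)
    rw [mem_Iio]
    by_contra! hpq
    exact (mem_filter.mp (hL q p hpq hq)).2 hp
  · intro hp
    by_contra hpS
    have : Iic p ⊆ L := fun q hq => hL p q (mem_Iic.mp hq) (by simpa [L] using hpS)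
    have := card_le_card this
    rw [Fin.card_Iic] at this
    omega

def choquetSum (v : Finset (Fin n) → ℝ) (σ : Equiv.Perm (Fin n)) : (Fin n → ℝ) →ₗ[ℝ] ℝ where
  toFun x := ∑ i : Fin n, x (σ i) * (v (SUp σ i) - v (SUp σ (i + 1)))
  map_add' x y := by simp only [Pi.add_apply, add_mul, sum_add_distrib]
  map_smul' a x := by simp only [Pi.smul_apply, smul_eq_mul, RingHom.id_apply, mul_sum, mul_assoc]

lemma choquetSum_apply (v : Finset (Fin n) → ℝ) (σ : Equiv.Perm (Fin n)) (x : Fin n → ℝ) :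
    choquetSum v σ x = ∑ i : Fin n, x (σ i) * (v (SUp σ i) - v (SUp σ (i + 1))) :=
  rfl

lemma isSignedChoquetOn_iff {f : (Fin n → ℝ) → ℝ} :
    IsSignedChoquetOn I f ↔ ∃ v : Finset (Fin n) → ℝ, v ∅ = 0 ∧
      ∀ σ : Equiv.Perm (Fin n), ∀ x : Fin n → ℝ, (∀ i, x i ∈ I) → Monotone (x ∘ σ) →
        f x = choquetSum v σ x :=
  Iff.rfl

variable {v : Finset (Fin n) → ℝ}

lemma choquetSum_indTuple_SUp (hv : v ∅ = 0) (m : ℕ) (c : ℝ) :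
    choquetSum v σ (indTuple (SUp σ m) c) = c * v (SUp σ m) := by
  rcases le_or_gt m n with hmn | hnm
  · set g : ℕ → ℝ := fun k => v (SUp σ k)
    have hIco : (range n).filter (m ≤ ·) = Ico m n := by
      ext k
      simp only [mem_filter, mem_range, mem_Ico]
      omega
    calc choquetSum v σ (indTuple (SUp σ m) c)
        = ∑ k ∈ range n, if m ≤ k then c * (g k - g (k + 1)) else 0 := by
          rw [choquetSum_apply, ← Fin.sum_univ_eq_sum_range
            (fun k : ℕ => if m ≤ k then c * (g k - g (k + 1)) else 0) n]
          refine Finset.sum_congr rfl fun p _ => ?_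
          simp only [indTuple, apply_mem_SUp_iff]
          split_ifs <;> simp [g]
      _ = c * ∑ k ∈ Ico m n, -(g (k + 1) - g k) := by
          rw [← sum_filter, hIco, mul_sum]
          simp
      _ = c * v (SUp σ m) := by
          rw [sum_neg_distrib, sum_Ico_sub g hmn]
          simp [g, SUp_eq_empty_of_le σ le_rfl, hv]
  · rw [SUp_eq_empty_of_le σ hnm.le, indTuple_empty, map_zero, hv, mul_zero]

lemma choquetSum_const (hv : v ∅ = 0) (c : ℝ) :
    choquetSum v σ (fun _ => c) = c * v univ := by
  have : indTuple (SUp σ 0) c = fun _ => c := by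
    ext j
    simp [indTuple, SUp_zero]
  rw [← this, choquetSum_indTuple_SUp hv, SUp_zero]

lemma choquetSum_indTuple_of_pos (hv : v ∅ = 0) {S : Finset (Fin n)} {c : ℝ} (hc : 0 < c)
    (h : Monotone (indTuple S c ∘ σ)) : choquetSum v σ (indTuple S c) = c * v S := by
  obtain ⟨m, rfl⟩ := exists_eq_SUp_of_monotone hc h
  exact choquetSum_indTuple_SUp hv m c

lemma choquetSum_indTuple_of_neg (hv : v ∅ = 0) {S : Finset (Fin n)} {c : ℝ} (hc : c < 0)
    (h : Monotone (indTuple S c ∘ σ)) :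
    choquetSum v σ (indTuple S c) = c * (v univ - v Sᶜ) := by
  have hcompl : Monotone (indTuple Sᶜ (-c) ∘ σ) := by
    rw [indTuple_compl_neg]
    exact fun p q hpq => sub_le_sub_right (h hpq) c
  have hsplit : indTuple S c = indTuple Sᶜ (-c) + fun _ => c := by
    rw [indTuple_compl_neg, sub_add_cancel]
  rw [hsplit, map_add, choquetSum_indTuple_of_pos hv (neg_pos.mpr hc) hcompl, choquetSum_const hv]
  ring

def SortedModularOn (I : Set ℝ) (σ : Equiv.Perm (Fin n)) (F : (Fin n → ℝ) → ℝ) : Prop :=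
  ∀ x y : Fin n → ℝ, (∀ i, x i ∈ I) → (∀ i, y i ∈ I) → Monotone (x ∘ σ) → Monotone (y ∘ σ) →
    F x + F y = F (fun i => min (x i) (y i)) + F (fun i => max (x i) (y i))

lemma ComonModularOn.sortedModularOn {f : (Fin n → ℝ) → ℝ} (hf : ComonModularOn I f)
    (σ : Equiv.Perm (Fin n)) : SortedModularOn I σ f :=
  fun x y hx hy hxσ hyσ => hf x y hx hy ⟨σ, hxσ, hyσ⟩

lemma LinearMap.sortedModularOn (L : (Fin n → ℝ) →ₗ[ℝ] ℝ) : SortedModularOn I σ L := by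
  intro x y _ _ _ _
  rw [← map_add, ← map_add]
  congr 1
  ext i
  exact (min_add_max _ _).symm

lemma SortedModularOn.sub {F G : (Fin n → ℝ) → ℝ} (hF : SortedModularOn I σ F)
    (hG : SortedModularOn I σ G) : SortedModularOn I σ (fun x => F x - G x) := by
  intro x y hx hy hxσ hyσ
  have := hF x y hx hy hxσ hyσ
  have := hG x y hx hy hxσ hyσ
  linarith

lemma monotone_neg_comp_iff (x : Fin n → ℝ) (σ : Equiv.Perm (Fin n)) :
    Monotone ((-x) ∘ σ) ↔ Monotone (x ∘ ⇑(σ * Fin.revPerm : Equiv.Perm (Fin n))) := by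
  simp only [Equiv.Perm.coe_mul]
  constructor <;> intro h p q hpq <;> simpa using h (Fin.rev_le_rev.mpr hpq)

lemma SortedModularOn.comp_neg {H : (Fin n → ℝ) → ℝ} (hH : SortedModularOn I σ H) :
    SortedModularOn (-I) (σ * Fin.revPerm) (fun x => H (-x)) := by
  intro x y hx hy hxσ hyσ
  have hmin : -(fun i => min (x i) (y i)) = fun i => max ((-x) i) ((-y) i) := by
    ext i
    simp [max_neg_neg]
  have hmax : -(fun i => max (x i) (y i)) = fun i => min ((-x) i) ((-y) i) := by
    ext i
    simp [min_neg_neg]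
  beta_reduce
  rw [hmin, hmax]
  linarith [hH (-x) (-y) (fun i => Set.mem_neg.mp (hx i)) (fun i => Set.mem_neg.mp (hy i))
    ((monotone_neg_comp_iff x σ).mpr hxσ) ((monotone_neg_comp_iff y σ).mpr hyσ)]

def truncSUp (σ : Equiv.Perm (Fin n)) (k : ℕ) (x : Fin n → ℝ) : Fin n → ℝ :=
  fun j => if j ∈ SUp σ k then x j else 0

lemma monotone_truncSUp {x : Fin n → ℝ} (hx0 : ∀ i, 0 ≤ x i) (hxσ : Monotone (x ∘ σ)) (k : ℕ) :
    Monotone (truncSUp σ k x ∘ σ) := by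
  intro p q hpq
  simp only [Function.comp_apply, truncSUp, apply_mem_SUp_iff]
  split_ifs with hp hq hq
  · exact hxσ hpq
  · exact absurd (hp.trans (Fin.le_def.mp hpq)) hq
  · exact hx0 _
  · exact le_rfl

section Vanishing

variable {H : (Fin n → ℝ) → ℝ} (hH : SortedModularOn I σ H) (h0 : (0 : ℝ) ∈ I)
  (hlevel : ∀ (S : Finset (Fin n)) (c : ℝ), c ∈ I → Monotone (indTuple S c ∘ σ) →
    H (indTuple S c) = 0)
include hH h0 hlevel

lemma SortedModularOn.eq_zero_of_nonneg {x : Fin n → ℝ} (hx : ∀ i, x i ∈ I) (hx0 : ∀ i, 0 ≤ x i)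
    (hxσ : Monotone (x ∘ σ)) : H x = 0 := by
  have hTI : ∀ k j, truncSUp σ k x j ∈ I := fun k j => by
    unfold truncSUp
    split_ifs
    exacts [hx j, h0]
  have hstep : ∀ k (hk : k < n), H (truncSUp σ k x) = H (truncSUp σ (k + 1) x) := by
    intro k hk
    set c := x (σ ⟨k, hk⟩)
    have hc : ∀ p : Fin n, k ≤ (p : ℕ) → c ≤ x (σ p) := fun p hp => hxσ (Fin.le_def.mpr hp)
    have hlev : ∀ m, Monotone (indTuple (SUp σ m) c ∘ σ) := fun m =>
      monotone_truncSUp (x := fun _ => c) (fun _ => hx0 _) monotone_const m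
    have hmin : (fun j => min (indTuple (SUp σ k) c j) (truncSUp σ (k + 1) x j)) =
        indTuple (SUp σ (k + 1)) c := by
      ext j
      obtain ⟨p, rfl⟩ := σ.surjective j
      simp only [indTuple, truncSUp, apply_mem_SUp_iff]
      split_ifs with h1 h2 <;> first
        | omega | exact min_eq_left (hc p h1) | exact min_eq_right (hx0 _) | exact min_self 0
    have hmax : (fun j => max (indTuple (SUp σ k) c j) (truncSUp σ (k + 1) x j)) =
        truncSUp σ k x := by
      ext j
      obtain ⟨p, rfl⟩ := σ.surjective j
      simp only [indTuple, truncSUp, apply_mem_SUp_iff]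
      split_ifs with h1 h2 <;> first
        | omega | exact max_eq_right (hc p h1) | exact max_self 0
        | rw [show p = ⟨k, hk⟩ from Fin.ext (show (p : ℕ) = k by omega)]; exact max_eq_left (hx0 _)
    have hmod := hH _ _ (indTuple_mem h0 (hx _)) (hTI (k + 1)) (hlev k)
      (monotone_truncSUp hx0 hxσ (k + 1))
    rw [hmin, hmax, hlevel _ _ (hx _) (hlev k), hlevel _ _ (hx _) (hlev (k + 1))] at hmod
    linarith
  have htop : H (truncSUp σ n x) = 0 := by
    have h := hlevel ∅ 0 h0 (by rw [indTuple_empty]; exact monotone_const)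
    have : truncSUp σ n x = indTuple ∅ 0 := by
      ext j
      simp [truncSUp, SUp_eq_empty_of_le σ le_rfl, indTuple]
    rwa [this]
  have hbot : H (truncSUp σ 0 x) = 0 :=
    Nat.decreasingInduction (motive := fun k _ => H (truncSUp σ k x) = 0)
      (fun k hk ih => (hstep k hk).trans ih) htop (Nat.zero_le n)
  have : truncSUp σ 0 x = x := by
    ext j
    simp [truncSUp, SUp_zero]
  rwa [this] at hbot

lemma SortedModularOn.eq_zero_of_nonpos {x : Fin n → ℝ} (hx : ∀ i, x i ∈ I) (hx0 : ∀ i, x i ≤ 0)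
    (hxσ : Monotone (x ∘ σ)) : H x = 0 := by
  have hlevel' : ∀ (S : Finset (Fin n)) (c : ℝ), c ∈ -I →
      Monotone (indTuple S c ∘ ⇑(σ * Fin.revPerm : Equiv.Perm (Fin n))) →
        H (-indTuple S c) = 0 := by
    intro S c hc hcσ
    rw [neg_indTuple]
    refine hlevel S (-c) hc ?_
    rw [← neg_indTuple]
    exact (monotone_neg_comp_iff _ σ).mpr hcσ
  have := hH.comp_neg.eq_zero_of_nonneg (x := -x) (by simpa using h0) hlevel'
    (fun i => by simpa using hx i) (fun i => by simpa using hx0 i)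
    ((monotone_neg_comp_iff (-x) σ).mp (by simpa using hxσ))
  simpa using this

lemma SortedModularOn.eq_zero {x : Fin n → ℝ} (hx : ∀ i, x i ∈ I) (hxσ : Monotone (x ∘ σ)) :
    H x = 0 := by
  have hzero : H (fun _ => 0) = 0 := by
    have := hlevel ∅ 0 h0 (by rw [indTuple_empty]; exact monotone_const)
    rwa [indTuple_empty] at this
  have hsplit := hH x (fun _ => 0) hx (fun _ => h0) hxσ monotone_const
  rw [hzero, hH.eq_zero_of_nonpos h0 hlevel (fun i => min_rec' (· ∈ I) (hx i) h0)
      (fun i => min_le_right _ _) (hxσ.min monotone_const),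
    hH.eq_zero_of_nonneg h0 hlevel (fun i => max_rec' (· ∈ I) (hx i) h0)
      (fun i => le_max_right _ _) (hxσ.max monotone_const)] at hsplit
  linarith

end Vanishing

end Sorted

lemma Real.sign_mul_self_mul_sign (c : ℝ) : Real.sign c * c * Real.sign c = c := by
  rcases lt_trichotomy c 0 with hc | rfl | hc
  · rw [Real.sign_of_neg hc]; ring
  · simp
  · rw [Real.sign_of_pos hc]; ring

namespace IsSignedChoquetOn

variable {n : ℕ} {I : Set ℝ} {f : (Fin n → ℝ) → ℝ} (hf : IsSignedChoquetOn I f)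
include hf

lemma comonModularOn : ComonModularOn I f := by
  obtain ⟨v, -, hv⟩ := isSignedChoquetOn_iff.mp hf
  rintro x y hx hy ⟨σ, hxσ, hyσ⟩
  rw [hv σ x hx hxσ, hv σ y hy hyσ,
    hv σ _ (fun i => min_rec' (· ∈ I) (hx i) (hy i)) (hxσ.min hyσ),
    hv σ _ (fun i => max_rec' (· ∈ I) (hx i) (hy i)) (hxσ.max hyσ)]
  exact (choquetSum v σ).sortedModularOn (I := Set.univ) x y (fun _ => trivial) (fun _ => trivial)
    hxσ hyσ

lemma map_zero (h0 : (0 : ℝ) ∈ I) : f (fun _ => 0) = 0 := by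
  obtain ⟨v, -, hv⟩ := isSignedChoquetOn_iff.mp hf
  rw [hv 1 _ (fun _ => h0) monotone_const]
  exact (choquetSum v 1).map_zero

lemma map_indTuple (h0 : (0 : ℝ) ∈ I) {c : ℝ} (hc : c ∈ I) (hsc : Real.sign c ∈ I)
    (S : Finset (Fin n)) :
    f (indTuple S c) = Real.sign c * c * f (indTuple S (Real.sign c)) := by
  obtain ⟨v, -, hv⟩ := isSignedChoquetOn_iff.mp hf
  set τ := Tuple.sort (indTuple S (Real.sign c))
  have hτ : Monotone (indTuple S (Real.sign c) ∘ τ) := Tuple.monotone_sort _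
  have hscale : indTuple S c = (Real.sign c * c) • indTuple S (Real.sign c) := by
    rw [← indTuple_smul, Real.sign_mul_self_mul_sign]
  have hcτ : Monotone (indTuple S c ∘ τ) := by
    rw [hscale]
    exact hτ.const_mul (Real.sign_mul_nonneg c)
  rw [hv τ _ (indTuple_mem h0 hc) hcτ, hv τ _ (indTuple_mem h0 hsc) hτ, hscale, map_smul,
    smul_eq_mul]

lemma map_indTuple_compl (hI : Set.Icc (-1 : ℝ) 1 ⊆ I) (S : Finset (Fin n)) :
    f (indTuple Sᶜ 1) = f (indTuple univ 1) + f (indTuple S (-1)) := by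
  obtain ⟨v, -, hv⟩ := isSignedChoquetOn_iff.mp hf
  have h0 : (0 : ℝ) ∈ I := hI ⟨by norm_num, by norm_num⟩
  have h1 : (1 : ℝ) ∈ I := hI ⟨by norm_num, le_rfl⟩
  set τ := Tuple.sort (indTuple S (-1))
  have hτ : Monotone (indTuple S (-1) ∘ τ) := Tuple.monotone_sort _
  have huniv : indTuple univ 1 = fun _ : Fin n => (1 : ℝ) := by
    ext j
    simp [indTuple]
  have hcompl : indTuple Sᶜ 1 = indTuple univ 1 + indTuple S (-1) := by
    ext j
    by_cases h : j ∈ S <;> simp [indTuple, h]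
  rw [hv τ _ (indTuple_mem h0 h1) (by rw [hcompl, huniv]; exact hτ.const_add 1),
    hv τ _ (indTuple_mem h0 h1) (by rw [huniv]; exact monotone_const),
    hv τ _ (indTuple_mem h0 (hI ⟨le_rfl, by norm_num⟩)) hτ, hcompl, map_add]

end IsSignedChoquetOn

lemma isSignedChoquetOn_of_comonModularOn {n : ℕ} {I : Set ℝ} {f : (Fin n → ℝ) → ℝ}
    (h0 : (0 : ℝ) ∈ I) (hm : ComonModularOn I f)
    (hhom : ∀ c ∈ I, ∀ S : Finset (Fin n),
      f (indTuple S c) = Real.sign c * c * f (indTuple S (Real.sign c)))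
    (hcompl : (∃ c ∈ I, c < 0) → ∀ S : Finset (Fin n),
      f (indTuple Sᶜ 1) = f (indTuple univ 1) + f (indTuple S (-1))) :
    IsSignedChoquetOn I f := by
  set v : Finset (Fin n) → ℝ := fun S => f (indTuple S 1)
  have hf0 : ∀ S, f (indTuple S 0) = 0 := fun S => by simpa using hhom 0 h0 S
  have hv : v ∅ = 0 := by
    rw [← hf0 ∅]
    simp only [v, indTuple_empty]
  refine isSignedChoquetOn_iff.mpr ⟨v, hv, fun σ x hx hxσ => sub_eq_zero.mp ?_⟩
  refine ((hm.sortedModularOn σ).sub (choquetSum v σ).sortedModularOn).eq_zero h0 ?_ hx hxσ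
  intro S c hc hcσ
  rw [sub_eq_zero]
  rcases lt_trichotomy c 0 with hneg | rfl | hpos
  · rw [choquetSum_indTuple_of_neg hv hneg hcσ, hhom c hc S, Real.sign_of_neg hneg,
      show f (indTuple S (-1)) = v Sᶜ - v univ by linarith [hcompl ⟨c, hc, hneg⟩ S]]
    ring
  · rw [hf0, indTuple_zero, map_zero]
  · rw [choquetSum_indTuple_of_pos hv hpos hcσ, hhom c hc S, Real.sign_of_pos hpos, one_mul]

theorem statement13_general (n : ℕ) (I : Set ℝ)
    (hcase : (Set.Icc (0 : ℝ) 1 ⊆ I ∧ I ⊆ Set.Ici 0) ∨ Set.Icc (-1 : ℝ) 1 ⊆ I)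
    (f : (Fin n → ℝ) → ℝ) :
    IsSignedChoquetOn I f ↔
      (ComonModularOn I f ∧
        (f (fun _ => 0) = 0 ∧
          ∀ x ∈ I, ∀ S : Finset (Fin n),
            f (indTuple S x) = Real.sign x * x * f (indTuple S (Real.sign x))) ∧
        (Set.Icc (-1 : ℝ) 1 ⊆ I →
          ∀ S : Finset (Fin n),
            f (indTuple Sᶜ 1) = f (indTuple Finset.univ 1) + f (indTuple S (-1)))) := by
  have h01 : Set.Icc (0 : ℝ) 1 ⊆ I :=
    hcase.elim (·.1) fun h => (Set.Icc_subset_Icc (by norm_num) le_rfl).trans h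
  have hcentered : ∀ c ∈ I, c < 0 → Set.Icc (-1 : ℝ) 1 ⊆ I := fun c hc hneg =>
    hcase.resolve_left fun h => (h.2 hc).not_gt hneg
  have h0 : (0 : ℝ) ∈ I := h01 ⟨le_rfl, zero_le_one⟩
  have hsign : ∀ c ∈ I, Real.sign c ∈ I := by
    intro c hc
    rcases lt_trichotomy c 0 with hneg | rfl | hpos
    · rw [Real.sign_of_neg hneg]
      exact hcentered c hc hneg ⟨le_rfl, by norm_num⟩
    · rwa [Real.sign_zero]
    · rw [Real.sign_of_pos hpos]
      exact h01 ⟨zero_le_one, le_rfl⟩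
  constructor
  · intro hf
    exact ⟨hf.comonModularOn, ⟨hf.map_zero h0, fun c hc => hf.map_indTuple h0 hc (hsign c hc)⟩,
      hf.map_indTuple_compl⟩
  · rintro ⟨hm, ⟨-, hhom⟩, hcompl⟩
    exact isSignedChoquetOn_of_comonModularOn h0 hm hhom fun ⟨c, hc, hneg⟩ =>
      hcompl (hcentered c hc hneg)

theorem statement13 (n : ℕ) (hn : 0 < n) (I : Set ℝ) (hI : I.OrdConnected)
    (hcase : (Set.Icc (0 : ℝ) 1 ⊆ I ∧ I ⊆ Set.Ici 0) ∨ Set.Icc (-1 : ℝ) 1 ⊆ I)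
    (f : (Fin n → ℝ) → ℝ) :
    IsSignedChoquetOn I f ↔
      (ComonModularOn I f ∧
        (f (fun _ => 0) = 0 ∧
          ∀ x ∈ I, ∀ S : Finset (Fin n),
            f (indTuple S x) = Real.sign x * x * f (indTuple S (Real.sign x))) ∧
        (Set.Icc (-1 : ℝ) 1 ⊆ I →
          ∀ S : Finset (Fin n),
            f (indTuple Sᶜ 1) = f (indTuple Finset.univ 1) + f (indTuple S (-1)))) :=
  statement13_general n I hcase f
end
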